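/- arXiv:2408.00543 — 3 statements merged into one kernel-verified Lean document; each statement's English description precedes it below -/
import Mathlib

section
/- Let B ∈ ℝ^{n×n} be symmetric positive definite and x ∈ ℝⁿ. Then D(x, d_B(x)) ≤ −d_B(x)ᵀ B d_B(x). -/
open RealInnerProductSpace

noncomputable section

abbrev E (n : ℕ) := EuclideanSpace ℝ (Fin n)

def maxD {n m : ℕ} [NeZero m] (f : Fin m → E n → ℝ) (x d : E n) : ℝ :=
  Finset.univ.sup' Finset.univ_nonempty (fun i => ⟪gradient (f i) x, d⟫)

def quad {n : ℕ} (B : Matrix (Fin n) (Fin n) ℝ) (d : E n) : ℝ :=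
  ∑ i, ∑ j, d i * B i j * d j

/-! As `D(x, ·)` is positively homogeneous and `dᵀ B d` is quadratic, comparing `d_B` with the
shortened directions `t • d_B`, `0 ≤ t < 1`, shows that
`φ t = t D(x, d_B) + t² (d_Bᵀ B d_B) / 2` is minimised on `[0, 1]` at `t = 1`, so its left
derivative `D(x, d_B) + d_Bᵀ B d_B` at `1` is nonpositive. -/

open Filter Set Topology

lemma maxD_smul {n m : ℕ} [NeZero m] (f : Fin m → E n → ℝ) (x d : E n) {t : ℝ} (ht : 0 ≤ t) :
    maxD f x (t • d) = t * maxD f x d := by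
  simp only [maxD, Finset.mul₀_sup' ht, real_inner_smul_right]

lemma quad_smul {n : ℕ} (B : Matrix (Fin n) (Fin n) ℝ) (d : E n) (t : ℝ) :
    quad B (t • d) = t ^ 2 * quad B d := by
  simp only [quad, PiLp.smul_apply, smul_eq_mul, Finset.mul_sum]
  exact Finset.sum_congr rfl fun _ _ => Finset.sum_congr rfl fun _ _ => by ring

lemma le_neg_of_forall_Ico_le {a b : ℝ}
    (h : ∀ t ∈ Ico (0 : ℝ) 1, a + b / 2 ≤ t * a + t ^ 2 * b / 2) : a ≤ -b := by
  have bound : ∀ t ∈ Ico (0 : ℝ) 1, a ≤ -(1 + t) * b / 2 := by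
    intro t ht
    have h1t : 0 < 1 - t := sub_pos.mpr ht.2
    refine le_of_mul_le_mul_left ?_ h1t
    nlinarith [h t ht]
  have lim : Tendsto (fun t : ℝ => -(1 + t) * b / 2) (𝓝[<] 1) (𝓝 (-b)) := by
    have hcont : Continuous fun t : ℝ => -(1 + t) * b / 2 := by fun_prop
    convert (hcont.tendsto 1).mono_left nhdsWithin_le_nhds using 2
    ring
  refine ge_of_tendsto lim ?_
  filter_upwards [Ioo_mem_nhdsLT zero_lt_one] with t ht using bound t (Ioo_subset_Ico_self ht)

theorem stmt5_general {n m : ℕ} [NeZero m] (f : Fin m → E n → ℝ)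
    (B : Matrix (Fin n) (Fin n) ℝ)
    (x dB : E n)
    (hmin : ∀ d : E n, maxD f x dB + quad B dB / 2 ≤ maxD f x d + quad B d / 2) :
    maxD f x dB ≤ -(quad B dB) := by
  refine le_neg_of_forall_Ico_le fun t ht => ?_
  have := hmin (t • dB)
  rwa [maxD_smul f x dB ht.1, quad_smul] at this

/-- D(x, d_B(x)) ≤ − d_B(x)ᵀ B d_B(x). -/
theorem stmt5 {n m : ℕ} [NeZero m] (f : Fin m → E n → ℝ)
    (hf : ∀ i, ContDiff ℝ 1 (f i))
    (B : Matrix (Fin n) (Fin n) ℝ) (hB : B.PosDef)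
    (x dB : E n)
    (hmin : ∀ d : E n, maxD f x dB + quad B dB / 2 ≤ maxD f x d + quad B d / 2) :
    maxD f x dB ≤ -(quad B dB) :=
  stmt5_general f B x dB hmin
end
end

section
/- Let B ∈ ℝ^{n×n} be symmetric positive definite, x ∈ ℝⁿ, and suppose d := d_B(x) ≠ 0. Then D(x, d) ≤ −cos β · ‖d‖ · ‖d_SD(x)‖, where cos β := (dᵀBd)/(‖d‖ ‖Bd‖). -/
open RealInnerProductSpace

noncomputable section

def mulVecE {n : ℕ} (B : Matrix (Fin n) (Fin n) ℝ) (v : E n) : E n :=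
  Matrix.toEuclideanLin B v

/-! Let φ := D(x, ·), convex and positively homogeneous. At a minimiser d of φ + Q/2, with Q
homogeneous of degree 2, t ↦ t φ(d) + t² Q(d)/2 is minimal at t = 1, so φ(d) = -Q(d); thus
φ(d_B) = -d_BᵀBd_B and φ(d_SD) = -‖d_SD‖². Optimality of d_B and convexity of φ make -Bd_B a
subgradient of φ at d_B, which by the identity above reads φ(v) ≥ -⟪Bd_B, v⟫ for all v. At
v = d_SD this gives ‖d_SD‖² ≤ ⟪Bd_B, d_SD⟫ ≤ ‖Bd_B‖ ‖d_SD‖, so ‖d_SD‖ ≤ ‖Bd_B‖, which is the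
claim since cos β ‖d_B‖ = d_BᵀBd_B / ‖Bd_B‖. -/

open Set Filter Topology

lemma nonneg_of_forall_nonneg_mul_add_sq {a c : ℝ}
    (h : ∀ t : ℝ, 0 < t → t ≤ 1 → 0 ≤ t * a + t ^ 2 * c) : 0 ≤ a := by
  have hlim : Tendsto (fun t : ℝ => a + t * c) (𝓝[>] 0) (𝓝 a) := by
    have : Continuous (fun t : ℝ => a + t * c) := by fun_prop
    simpa using (this.tendsto 0).mono_left nhdsWithin_le_nhds
  refine ge_of_tendsto hlim ?_
  filter_upwards [Ioc_mem_nhdsGT one_pos] with t ⟨ht0, ht1⟩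
  exact nonneg_of_mul_nonneg_right (by linarith [h t ht0 ht1]) ht0

lemma neg_eq_and_nonneg_of_forall_le_mul_add_sq {a b : ℝ}
    (h : ∀ t : ℝ, 0 ≤ t → a + b / 2 ≤ t * a + t ^ 2 * b / 2) : a = -b ∧ 0 ≤ b := by
  have hright : 0 ≤ a + b := nonneg_of_forall_nonneg_mul_add_sq (c := b / 2) fun s hs _ => by
    nlinarith [h (1 + s) (by linarith)]
  have hleft : 0 ≤ -(a + b) := nonneg_of_forall_nonneg_mul_add_sq (c := b / 2) fun s _ hs => by
    nlinarith [h (1 - s) (by linarith)]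
  have hzero := h 0 le_rfl
  constructor <;> nlinarith

lemma div_mul_mul_le_self {q a g s : ℝ} (hq : 0 ≤ q) (hs : 0 ≤ s) (hsg : s ≤ g) :
    q / (a * g) * a * s ≤ q := by
  rcases eq_or_ne a 0 with rfl | ha
  · simpa using hq
  rcases (hs.trans hsg).eq_or_lt with rfl | hg
  · simpa using hq
  calc q / (a * g) * a * s = q * (s / g) := by field_simp
    _ ≤ q * 1 := by gcongr; exact div_le_one_of_le₀ hsg hg.le
    _ = q := mul_one q

lemma eq_neg_and_nonneg_of_forall_add_half_le {V : Type*} [SMul ℝ V] {φ Q : V → ℝ} {d₀ : V}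
    (hφ : ∀ t : ℝ, 0 ≤ t → φ (t • d₀) = t * φ d₀) (hQ : ∀ t : ℝ, Q (t • d₀) = t ^ 2 * Q d₀)
    (hmin : ∀ d, φ d₀ + Q d₀ / 2 ≤ φ d + Q d / 2) : φ d₀ = -Q d₀ ∧ 0 ≤ Q d₀ :=
  neg_eq_and_nonneg_of_forall_le_mul_add_sq fun t ht => by
    simpa only [hφ t ht, hQ t, mul_div_assoc] using hmin (t • d₀)

section InnerProductSpace

variable {V : Type*} [NormedAddCommGroup V] [InnerProductSpace ℝ V]

lemma norm_le_of_sq_norm_le_inner {u v : V} (h : ‖v‖ ^ 2 ≤ ⟪u, v⟫) : ‖v‖ ≤ ‖u‖ := by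
  nlinarith [real_inner_le_norm u v, norm_nonneg u, norm_nonneg v]

lemma inner_map_smul_smul (T : V →ₗ[ℝ] V) (t : ℝ) (d : V) :
    ⟪T (t • d), t • d⟫ = t ^ 2 * ⟪T d, d⟫ := by
  rw [map_smul, real_inner_smul_left, real_inner_smul_right]
  ring

lemma sub_inner_le_of_forall_add_half_inner_le {φ : V → ℝ} (hφ : ConvexOn ℝ univ φ)
    {T : V →ₗ[ℝ] V} (hT : T.IsSymmetric) {d₀ : V}
    (hmin : ∀ d, φ d₀ + ⟪T d₀, d₀⟫ / 2 ≤ φ d + ⟪T d, d⟫ / 2) (d : V) :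
    φ d₀ - ⟪T d₀, d - d₀⟫ ≤ φ d := by
  set v := d - d₀
  have key : ∀ t : ℝ, 0 < t → t ≤ 1 →
      0 ≤ t * (φ d - φ d₀ + ⟪T d₀, v⟫) + t ^ 2 * (⟪T v, v⟫ / 2) := by
    intro t ht0 ht1
    have hconv : φ (d₀ + t • v) ≤ (1 - t) * φ d₀ + t * φ d := by
      have hpt : d₀ + t • v = (1 - t) • d₀ + t • d := by simp only [v]; module
      rw [hpt]
      exact hφ.2 (mem_univ _) (mem_univ _) (by linarith) ht0.le (by ring)
    have hquad : ⟪T (d₀ + t • v), d₀ + t • v⟫ =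
        ⟪T d₀, d₀⟫ + 2 * t * ⟪T d₀, v⟫ + t ^ 2 * ⟪T v, v⟫ := by
      rw [map_add, inner_add_left, inner_add_right, inner_add_right, inner_map_smul_smul,
        map_smul, real_inner_smul_left, real_inner_smul_right, hT v d₀, real_inner_comm (T d₀) v]
      ring
    nlinarith [hmin (d₀ + t • v)]
  linarith [nonneg_of_forall_nonneg_mul_add_sq key]

end InnerProductSpace

section MaxD

variable {n m : ℕ} [NeZero m] (f : Fin m → E n → ℝ) (x : E n)

lemma maxD_smul_of_nonneg {t : ℝ} (ht : 0 ≤ t) (d : E n) :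
    maxD f x (t • d) = t * maxD f x d := by
  simp only [maxD, inner_smul_right, Finset.mul₀_sup' ht]

lemma convexOn_maxD : ConvexOn ℝ univ (maxD f x) := by
  refine ⟨convex_univ, fun a _ b _ s t hs ht _ => Finset.sup'_le _ _ fun i _ => ?_⟩
  rw [inner_add_right, inner_smul_right, inner_smul_right, smul_eq_mul, smul_eq_mul]
  gcongr <;> exact Finset.le_sup' (fun j => ⟪gradient (f j) x, _⟫) (Finset.mem_univ i)

end MaxD

lemma quad_eq_inner {n : ℕ} (B : Matrix (Fin n) (Fin n) ℝ) (d : E n) :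
    quad B d = ⟪Matrix.toEuclideanLin B d, d⟫ := by
  simp only [quad, Matrix.toLpLin_apply, PiLp.inner_apply, RCLike.inner_apply,
    conj_trivial, Matrix.mulVec, dotProduct, Finset.mul_sum]
  refine Finset.sum_congr rfl fun i _ => Finset.sum_congr rfl fun j _ => ?_
  ring

theorem stmt13_general {n m : ℕ} [NeZero m] (f : Fin m → E n → ℝ)
    (B : Matrix (Fin n) (Fin n) ℝ) (hB : B.PosDef)
    (x dB dsd : E n)
    (hdB : ∀ d : E n, maxD f x dB + quad B dB / 2 ≤ maxD f x d + quad B d / 2)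
    (hdsd : ∀ d : E n, maxD f x dsd + ‖dsd‖ ^ 2 / 2 ≤ maxD f x d + ‖d‖ ^ 2 / 2) :
    maxD f x dB ≤ -(quad B dB / (‖dB‖ * ‖mulVecE B dB‖) * ‖dB‖ * ‖dsd‖) := by
  set T := Matrix.toEuclideanLin B
  have hT : T.IsSymmetric := Matrix.isSymmetric_toEuclideanLin_iff.mpr hB.1
  simp only [quad_eq_inner] at hdB ⊢
  obtain ⟨hDdB, hq⟩ := eq_neg_and_nonneg_of_forall_add_half_le (Q := fun d => ⟪T d, d⟫)
    (fun t ht => maxD_smul_of_nonneg f x ht dB) (inner_map_smul_smul T · dB) hdB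
  obtain ⟨hDdsd, -⟩ := eq_neg_and_nonneg_of_forall_add_half_le (Q := (‖·‖ ^ 2))
    (fun t ht => maxD_smul_of_nonneg f x ht dsd)
    (fun t => by rw [norm_smul, mul_pow, Real.norm_eq_abs, sq_abs]) hdsd
  have hsubgrad : ∀ d, -⟪T dB, d⟫ ≤ maxD f x d := fun d => by
    have := sub_inner_le_of_forall_add_half_inner_le (convexOn_maxD f x) hT hdB d
    rw [inner_sub_right, hDdB] at this
    linarith
  have hnorm : ‖dsd‖ ≤ ‖T dB‖ :=
    norm_le_of_sq_norm_le_inner (by linarith [hsubgrad dsd])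
  rw [hDdB, neg_le_neg_iff]
  exact div_mul_mul_le_self hq (norm_nonneg _) hnorm

/-- D(x, d_B(x)) ≤ −cos β · ‖d_B(x)‖ · ‖d_SD(x)‖. -/
theorem stmt13 {n m : ℕ} [NeZero m] (f : Fin m → E n → ℝ)
    (hf : ∀ i, ContDiff ℝ 1 (f i))
    (B : Matrix (Fin n) (Fin n) ℝ) (hB : B.PosDef)
    (x dB dsd : E n) (hdB0 : dB ≠ 0)
    (hdB : ∀ d : E n, maxD f x dB + quad B dB / 2 ≤ maxD f x d + quad B d / 2)
    (hdsd : ∀ d : E n, maxD f x dsd + ‖dsd‖ ^ 2 / 2 ≤ maxD f x d + ‖d‖ ^ 2 / 2) :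
    maxD f x dB ≤ -(quad B dB / (‖dB‖ * ‖mulVecE B dB‖) * ‖dB‖ * ‖dsd‖) :=
  stmt13_general f B hB x dB dsd hdB hdsd
end
end

section
/- (Zoutendijk condition) Suppose each f_i is continuously differentiable, bounded below, and ∇f_i is Lipschitz continuous with constant L_i. Let 0 < σ₁ < σ₂ < 1 and let (x_k), (d_k), (α_k) be sequences with d_k ≠ 0, D(x_k, d_k) < 0, x_{k+1} = x_k + α_k d_k, and α_k satisfying the Wolfe conditions at (x_k, d_k) for every k. Then Σ_{k≥0} D(x_k, d_k)² / ‖d_k‖² < ∞. -/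
/-!
A Wolfe step cannot be short: the curvature condition for the index attaining `D(x + α d, d)`,
combined with the bound `⟪∇f_i(x + α d) - ∇f_i(x), d⟫ ≤ L α ‖d‖²` for a common Lipschitz
constant `L`, gives `(1 - σ₂)(-D(x, d)) ≤ L α ‖d‖²`. Feeding this lower bound on `α` into the
sufficient decrease condition shows that each step lowers `f_1` by at least
`σ₁(1 - σ₂)/L · D(x, d)² / ‖d‖²`, and these decreases telescope against the lower bound of `f_1`.
-/

open RealInnerProductSpace

noncomputable section

open scoped NNReal

theorem summable_of_le_sub_succ_of_bddBelow {a u : ℕ → ℝ} (ha : ∀ k, 0 ≤ a k)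
    (hau : ∀ k, a k ≤ u k - u (k + 1)) (hu : BddBelow (Set.range u)) : Summable a := by
  obtain ⟨B, hB⟩ := hu
  refine summable_of_sum_range_le ha (c := u 0 - B) fun N => ?_
  calc ∑ k ∈ Finset.range N, a k
      ≤ ∑ k ∈ Finset.range N, (u k - u (k + 1)) := Finset.sum_le_sum fun k _ => hau k
    _ = u 0 - u N := Finset.sum_range_sub' u N
    _ ≤ u 0 - B := by linarith [hB ⟨N, rfl⟩]

theorem LipschitzWith.inner_add_smul_le {F : Type*} [NormedAddCommGroup F]
    [InnerProductSpace ℝ F] {g : F → F} {K : ℝ≥0} (hg : LipschitzWith K g) (x d : F)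
    {α : ℝ} (hα : 0 ≤ α) : ⟪g (x + α • d), d⟫ ≤ ⟪g x, d⟫ + K * α * ‖d‖ ^ 2 := by
  have hdist : ‖g (x + α • d) - g x‖ ≤ K * (α * ‖d‖) := by
    simpa [dist_eq_norm, norm_smul, abs_of_nonneg hα] using hg.dist_le_mul (x + α • d) x
  have hinner : ⟪g (x + α • d) - g x, d⟫ ≤ K * α * ‖d‖ ^ 2 :=
    calc ⟪g (x + α • d) - g x, d⟫ ≤ ‖g (x + α • d) - g x‖ * ‖d‖ := real_inner_le_norm _ _
      _ ≤ K * (α * ‖d‖) * ‖d‖ := by gcongr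
      _ = K * α * ‖d‖ ^ 2 := by ring
  rw [inner_sub_left] at hinner
  linarith

section maxD

variable {n m : ℕ} [NeZero m] (f : Fin m → E n → ℝ)

theorem inner_gradient_le_maxD (x d : E n) (i : Fin m) : ⟪gradient (f i) x, d⟫ ≤ maxD f x d :=
  Finset.le_sup' (fun j => ⟪gradient (f j) x, d⟫) (Finset.mem_univ i)

theorem exists_maxD_eq_inner_gradient (x d : E n) :
    ∃ i, maxD f x d = ⟪gradient (f i) x, d⟫ := by
  obtain ⟨i, -, hi⟩ := Finset.exists_mem_eq_sup' Finset.univ_nonempty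
    (fun j => ⟪gradient (f j) x, d⟫)
  exact ⟨i, hi⟩

theorem one_sub_mul_neg_maxD_le_of_curvature {K : ℝ≥0}
    (hL : ∀ i, LipschitzWith K (fun z => gradient (f i) z)) {σ₂ α : ℝ} (hα : 0 ≤ α) {x d : E n}
    (hcurv : σ₂ * maxD f x d ≤ maxD f (x + α • d) d) :
    (1 - σ₂) * -maxD f x d ≤ K * α * ‖d‖ ^ 2 := by
  obtain ⟨i, hi⟩ := exists_maxD_eq_inner_gradient f (x + α • d) d
  have hlip := (hL i).inner_add_smul_le x d hα
  have hle := inner_gradient_le_maxD f x d i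
  linarith

end maxD

theorem mul_sq_div_le_of_sufficient_decrease {D s α σ₁ σ₂ K φ₀ φ₁ : ℝ} (hD : D < 0) (hs : 0 < s)
    (hK : 0 < K) (hσ₁ : 0 < σ₁) (hstep : (1 - σ₂) * -D ≤ K * α * s)
    (hdecr : φ₁ ≤ φ₀ + σ₁ * α * D) :
    σ₁ * (1 - σ₂) / K * (D ^ 2 / s) ≤ φ₀ - φ₁ := by
  have hα : (1 - σ₂) * -D / (K * s) ≤ α := by
    rw [div_le_iff₀ (mul_pos hK hs)]
    linarith
  calc σ₁ * (1 - σ₂) / K * (D ^ 2 / s) = σ₁ * -D * ((1 - σ₂) * -D / (K * s)) := by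
        field_simp
    _ ≤ σ₁ * -D * α := by gcongr; exact (mul_pos hσ₁ (neg_pos.2 hD)).le
    _ ≤ φ₀ - φ₁ := by linarith

theorem stmt14_general {n m : ℕ} [NeZero m] (f : Fin m → E n → ℝ)
    (hbdd : ∀ i, BddBelow (Set.range (f i)))
    (L : Fin m → NNReal) (hL : ∀ i, LipschitzWith (L i) (fun z => gradient (f i) z))
    (σ₁ σ₂ : ℝ) (h1 : 0 < σ₁) (h2 : σ₂ < 1)
    (x d : ℕ → E n) (α : ℕ → ℝ)
    (hd0 : ∀ k, d k ≠ 0) (hDneg : ∀ k, maxD f (x k) (d k) < 0)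
    (hα : ∀ k, 0 < α k)
    (hx : ∀ k, x (k + 1) = x k + α k • d k)
    (hw1 : ∀ k, ∀ i, f i (x k + α k • d k) ≤ f i (x k) + σ₁ * α k * maxD f (x k) (d k))
    (hw2 : ∀ k, σ₂ * maxD f (x k) (d k) ≤ maxD f (x k + α k • d k) (d k)) :
    Summable fun k => maxD f (x k) (d k) ^ 2 / ‖d k‖ ^ 2 := by
  set K : ℝ≥0 := ∑ i, L i + 1
  have hK : (0 : ℝ) < K := by positivity
  have hLK : ∀ i, LipschitzWith K (fun z => gradient (f i) z) := fun i =>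
    (hL i).weaken <| le_add_right <| Finset.single_le_sum (fun _ _ => zero_le) (Finset.mem_univ i)
  have hc : 0 < σ₁ * (1 - σ₂) / K := div_pos (mul_pos h1 (by linarith)) hK
  rw [← summable_mul_left_iff hc.ne']
  refine summable_of_le_sub_succ_of_bddBelow (u := fun k => f 0 (x k))
    (fun k => mul_nonneg hc.le (by positivity))
    (fun k => ?_) ((hbdd 0).mono (Set.range_comp_subset_range x (f 0)))
  rw [hx k]
  exact mul_sq_div_le_of_sufficient_decrease (hDneg k) (pow_pos (norm_pos_iff.2 (hd0 k)) 2) hK h1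
    (one_sub_mul_neg_maxD_le_of_curvature f hLK (hα k).le (hw2 k)) (hw1 k 0)

/-- Zoutendijk condition. -/
theorem stmt14 {n m : ℕ} [NeZero m] (f : Fin m → E n → ℝ)
    (hf : ∀ i, ContDiff ℝ 1 (f i))
    (hbdd : ∀ i, BddBelow (Set.range (f i)))
    (L : Fin m → NNReal) (hL : ∀ i, LipschitzWith (L i) (fun z => gradient (f i) z))
    (σ₁ σ₂ : ℝ) (h1 : 0 < σ₁) (h12 : σ₁ < σ₂) (h2 : σ₂ < 1)
    (x d : ℕ → E n) (α : ℕ → ℝ)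
    (hd0 : ∀ k, d k ≠ 0) (hDneg : ∀ k, maxD f (x k) (d k) < 0)
    (hα : ∀ k, 0 < α k)
    (hx : ∀ k, x (k + 1) = x k + α k • d k)
    (hw1 : ∀ k, ∀ i, f i (x k + α k • d k) ≤ f i (x k) + σ₁ * α k * maxD f (x k) (d k))
    (hw2 : ∀ k, σ₂ * maxD f (x k) (d k) ≤ maxD f (x k + α k • d k) (d k)) :
    Summable fun k => maxD f (x k) (d k) ^ 2 / ‖d k‖ ^ 2 :=
  stmt14_general f hbdd L hL σ₁ σ₂ h1 h2 x d α hd0 hDneg hα hx hw1 hw2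
end
end
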